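/- Let u⁻, u⁺ ∈ [0,V] with u⁺ < u⁻. If ρ̌(u⁺) < ρ̂(u⁻), then the ordering ρ̌(u⁻) < ρ̌(u⁺) < ρ̂(u⁻) < ρ̂(u⁺) holds, and moreover u⁻ − u⁺ ≥ (β/2) · ( ρ̌(u⁺) − ρ̌(u⁻) ). -/

import Mathlib

/-!
From `f'' ≤ -β`, `f` lies below each of its tangent lines by `β/2 (y - x)²`; everything else
follows from this inequality. Since `φ_u` is tangent to the concave reduced flux, it dominates
`f_α`, so `φ_u ≥ 0 = f` at `0` and (as `u ≥ 0`) at `R`, while at a tangency point `ρ̃_u > 0`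
strict concavity gives `f ρ̃_u > α f (ρ̃_u / α) = φ_u ρ̃_u`; by the intermediate value theorem every point where `f`
exceeds `φ_u` lies strictly between `ρ̌(u)` and `ρ̂(u)`. For `u⁺ < u⁻` the tangency points satisfy
`ρ̃_{u⁻} < ρ̃_{u⁺}`, and `φ_{u⁺}` dominates `φ_{u⁻}` left of `ρ̃_{u⁻}` (the reverse right of
`ρ̃_{u⁺}`), which orders the contact points; `ρ̃_{u⁻} = 0` is excluded because then `φ_{u⁻}` is
the tangent of `f` at `0` and `I_{u⁻} = {0}`. Finally `u⁻` and `u⁺` are the slopes of the secants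
of `f` over the interlaced intervals `[ρ̌(u⁻), ρ̂(u⁻)]` and `[ρ̌(u⁺), ρ̂(u⁺)]`, and the strong
three-point inequality compares them.
-/

open Set

theorem ConcaveOn.le_tangent_of_hasDerivAt {s : Set ℝ} {g : ℝ → ℝ} {g' x y : ℝ}
    (hg : ConcaveOn ℝ s g) (hx : x ∈ s) (hy : y ∈ s) (hd : HasDerivAt g g' x) :
    g y ≤ g x + g' * (y - x) := by
  rcases lt_trichotomy x y with hxy | rfl | hyx
  · have := hg.slope_le_of_hasDerivAt hx hy hxy hd
    rw [slope_def_field, div_le_iff₀ (sub_pos.2 hxy)] at this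
    linarith
  · simp
  · have := hg.le_slope_of_hasDerivAt hy hx hyx hd
    rw [slope_def_field, le_div_iff₀ (sub_pos.2 hyx)] at this
    linarith

-- The tangent-line form of `β`-strong concavity, with `f'` in the role of the derivative.
def BelowTangentsOn (s : Set ℝ) (β : ℝ) (f f' : ℝ → ℝ) : Prop :=
  ∀ x ∈ s, ∀ y ∈ s, f y ≤ f x + f' x * (y - x) - β / 2 * (y - x) ^ 2

theorem belowTangentsOn_of_deriv2_le {s : Set ℝ} {β : ℝ} {f f' f'' : ℝ → ℝ} (hs : Convex ℝ s)
    (hf : ∀ x ∈ s, HasDerivAt f (f' x) x) (hf' : ∀ x ∈ s, HasDerivAt f' (f'' x) x)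
    (hf'' : ∀ x ∈ s, f'' x ≤ -β) : BelowTangentsOn s β f f' := by
  have hg : ∀ x ∈ s, HasDerivAt (fun y => f y + β / 2 * y ^ 2) (f' x + β * x) x := fun x hx =>
    (hf x hx).add (((hasDerivAt_pow 2 x).const_mul (β / 2)).congr_deriv (by ring))
  have hg' : ∀ x ∈ s, HasDerivAt (fun y => f' y + β * y) (f'' x + β) x := fun x hx =>
    (hf' x hx).add (((hasDerivAt_id x).const_mul β).congr_deriv (by simp))
  have hconc : ConcaveOn ℝ s (fun y => f y + β / 2 * y ^ 2) :=
    concaveOn_of_hasDerivWithinAt2_nonpos hs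
      (fun x hx => (hg x hx).continuousAt.continuousWithinAt)
      (fun x hx => (hg x (interior_subset hx)).hasDerivWithinAt)
      (fun x hx => (hg' x (interior_subset hx)).hasDerivWithinAt)
      (fun x hx => by linarith [hf'' x (interior_subset hx)])
  intro x hx y hy
  linear_combination hconc.le_tangent_of_hasDerivAt hx hy (hg x hx)

namespace BelowTangentsOn

variable {s : Set ℝ} {β : ℝ} {f f' : ℝ → ℝ}

theorem chord_le (hT : BelowTangentsOn s β f f') {x m y : ℝ} (hx : x ∈ s) (hm : m ∈ s)
    (hy : y ∈ s) (hxm : x ≤ m) (hmy : m ≤ y) :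
    (y - m) * f x + (m - x) * f y + β / 2 * ((m - x) * (y - m) * (y - x)) ≤ (y - x) * f m := by
  have h₁ := mul_le_mul_of_nonneg_left (hT m hm x hx) (sub_nonneg.2 hmy)
  have h₂ := mul_le_mul_of_nonneg_left (hT m hm y hy) (sub_nonneg.2 hxm)
  linarith

theorem antitoneOn (hT : BelowTangentsOn s β f f') (hβ : 0 ≤ β) : AntitoneOn f' s := by
  intro x hx y hy hxy
  rcases hxy.eq_or_lt with rfl | hxy
  · rfl
  have h₁ := hT x hx y hy
  have h₂ := hT y hy x hx
  nlinarith [sq_nonneg (y - x)]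

theorem mul_apply_lt_apply_mul {R : ℝ} (hT : BelowTangentsOn (Icc 0 R) β f f') (hβ : 0 < β)
    (hf0 : f 0 = 0) {α y : ℝ} (hα : α ∈ Ioo 0 1) (hy : y ∈ Ioc 0 R) :
    α * f y < f (α * y) := by
  have hαy : α * y < y := mul_lt_of_lt_one_left hy.1 hα.2
  have hαy₀ : 0 < α * y := mul_pos hα.1 hy.1
  have h := hT.chord_le (left_mem_Icc.2 (hy.1.le.trans hy.2)) ⟨hαy₀.le, hαy.le.trans hy.2⟩
    (Ioc_subset_Icc_self hy) hαy₀.le hαy.le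
  rw [hf0] at h
  have hgain : 0 < β / 2 * ((α * y - 0) * (y - α * y) * (y - 0)) := by
    rw [sub_zero, sub_zero]
    exact mul_pos (half_pos hβ) (mul_pos (mul_pos hαy₀ (sub_pos.2 hαy)) hy.1)
  exact lt_of_mul_lt_mul_left (by linarith) hy.1.le

theorem le_sub_of_interlaced (hT : BelowTangentsOn s β f f') (hβ : 0 ≤ β)
    {c₁ c₂ h₁ h₂ u₁ u₂ : ℝ} (hc₁ : c₁ ∈ s) (hc₂ : c₂ ∈ s) (hh₁ : h₁ ∈ s) (hh₂ : h₂ ∈ s)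
    (hc : c₁ < c₂) (hch : c₂ < h₁) (hh : h₁ < h₂)
    (e₁ : f h₁ - f c₁ = u₁ * (h₁ - c₁)) (e₂ : f h₂ - f c₂ = u₂ * (h₂ - c₂)) :
    β / 2 * (c₂ - c₁) ≤ u₁ - u₂ := by
  have hpos : 0 < h₂ - c₂ := by linarith
  -- `f` lies above its chord over `[c₂, h₂]` at `h₁`, and below it by a quadratic margin at `c₁`.
  have above : f c₂ + u₂ * (h₁ - c₂) ≤ f h₁ := by
    refine le_of_mul_le_mul_left ?_ hpos
    nlinarith [hT.chord_le hc₂ hh₁ hh₂ hch.le hh.le, mul_nonneg hβ hpos.le,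
      mul_nonneg (sub_nonneg.2 hch.le) (sub_nonneg.2 hh.le)]
  have below : f c₁ ≤ f c₂ + u₂ * (c₁ - c₂) - β / 2 * ((c₂ - c₁) * (h₂ - c₁)) := by
    refine le_of_mul_le_mul_left ?_ hpos
    nlinarith [hT.chord_le hc₁ hc₂ hh₂ hc.le (hch.trans hh).le]
  have hgap : β / 2 * ((c₂ - c₁) * (h₁ - c₁)) ≤ (u₁ - u₂) * (h₁ - c₁) := by
    have := mul_le_mul_of_nonneg_left (mul_le_mul_of_nonneg_left hh.le (sub_nonneg.2 hc.le))
      (div_nonneg hβ zero_le_two)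
    nlinarith
  nlinarith [sub_pos.2 (hc.trans hch)]

end BelowTangentsOn

def contactSet (f ℓ : ℝ → ℝ) (a b : ℝ) : Set ℝ :=
  {ρ | ρ ∈ Icc a b ∧ f ρ = ℓ ρ}

section Crossing

variable {f ℓ₁ ℓ₂ : ℝ → ℝ} {a b t c : ℝ}

theorem lt_of_isLeast_contactSet {L x : ℝ} (hf : ContinuousOn f (Icc a b))
    (hℓ : ContinuousOn ℓ₁ (Icc a b)) (ha : f a ≤ ℓ₁ a) (hL : IsLeast (contactSet f ℓ₁ a b) L)
    (hx : x ∈ Icc a b) (hlt : ℓ₁ x < f x) : L < x := by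
  obtain ⟨z, hz, hfz⟩ : ∃ z ∈ Icc a x, (f - ℓ₁) z = 0 :=
    intermediate_value_Icc hx.1 ((hf.sub hℓ).mono (Icc_subset_Icc_right hx.2))
      ⟨sub_nonpos.2 ha, (sub_pos.2 hlt).le⟩
  refine ((hL.2 ⟨⟨hz.1, hz.2.trans hx.2⟩, sub_eq_zero.1 hfz⟩).trans hz.2).lt_of_ne ?_
  rintro rfl
  exact hlt.ne' hL.1.2

theorem lt_of_isGreatest_contactSet {G x : ℝ} (hf : ContinuousOn f (Icc a b))
    (hℓ : ContinuousOn ℓ₁ (Icc a b)) (hb : f b ≤ ℓ₁ b) (hG : IsGreatest (contactSet f ℓ₁ a b) G)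
    (hx : x ∈ Icc a b) (hlt : ℓ₁ x < f x) : x < G := by
  obtain ⟨z, hz, hfz⟩ : ∃ z ∈ Icc x b, (f - ℓ₁) z = 0 :=
    intermediate_value_Icc' hx.2 ((hf.sub hℓ).mono (Icc_subset_Icc_left hx.1))
      ⟨sub_nonpos.2 hb, (sub_pos.2 hlt).le⟩
  refine (hz.1.trans (hG.2 ⟨⟨hx.1.trans hz.1, hz.2⟩, sub_eq_zero.1 hfz⟩)).lt_of_ne' ?_
  rintro rfl
  exact hlt.ne' hG.1.2

theorem isLeast_contactSet_lt {L : ℝ} (hf : ContinuousOn f (Icc a b))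
    (hℓ : ContinuousOn ℓ₁ (Icc a b)) (ha : f a ≤ ℓ₁ a) (ht : t ∈ Icc a b) (hft : ℓ₁ t < f t)
    (hdom : ∀ ρ < t, ℓ₁ ρ < ℓ₂ ρ) (hL : IsLeast (contactSet f ℓ₁ a b) L)
    (hc : c ∈ contactSet f ℓ₂ a b) : L < c := by
  rcases lt_or_ge c t with hct | htc
  · exact lt_of_isLeast_contactSet hf hℓ ha hL hc.1 ((hdom c hct).trans_eq hc.2.symm)
  · exact (lt_of_isLeast_contactSet hf hℓ ha hL ht hft).trans_le htc

theorem lt_isGreatest_contactSet {G : ℝ} (hf : ContinuousOn f (Icc a b))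
    (hℓ : ContinuousOn ℓ₁ (Icc a b)) (hb : f b ≤ ℓ₁ b) (ht : t ∈ Icc a b) (hft : ℓ₁ t < f t)
    (hdom : ∀ ρ, t < ρ → ℓ₁ ρ < ℓ₂ ρ) (hG : IsGreatest (contactSet f ℓ₁ a b) G)
    (hc : c ∈ contactSet f ℓ₂ a b) : c < G := by
  rcases lt_or_ge t c with htc | hct
  · exact lt_of_isGreatest_contactSet hf hℓ hb hG hc.1 ((hdom c htc).trans_eq hc.2.symm)
  · exact hct.trans_lt (lt_of_isGreatest_contactSet hf hℓ hb hG ht hft)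

end Crossing

theorem HasDerivAt.const_mul_comp_div {f : ℝ → ℝ} {d α t : ℝ} (hf : HasDerivAt f d (t / α))
    (hα : α ≠ 0) : HasDerivAt (fun x => α * f (x / α)) d t :=
  ((hf.comp t ((hasDerivAt_id t).div_const α)).const_mul α).congr_deriv (by field_simp)

theorem div_mem_Icc_of_mem_Icc_mul {α t R : ℝ} (hα : 0 < α) (ht : t ∈ Icc 0 (α * R)) :
    t / α ∈ Icc 0 R :=
  ⟨div_nonneg ht.1 hα.le, (div_le_iff₀' hα).2 ht.2⟩

/- The line `φ_u` of slope `u` through `(t, f_α t)`, where `f_α x = α * f (x / α)`; for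
`t = ρ̃_u` the set `I_u` is `contactSet f (reducedTangent f α t u) 0 R`. -/
noncomputable def reducedTangent (f : ℝ → ℝ) (α t u : ℝ) (ρ : ℝ) : ℝ :=
  α * f (t / α) + u * (ρ - t)

namespace reducedTangent

variable {f f' : ℝ → ℝ} {R β α t u : ℝ}

theorem continuous : Continuous (reducedTangent f α t u) := by
  unfold reducedTangent
  fun_prop

theorem mul_apply_div_le (hT : BelowTangentsOn (Icc 0 R) β f f') (hβ : 0 ≤ β) (hα : 0 < α)
    (ht : t / α ∈ Icc 0 R) (hu : u = f' (t / α)) {x : ℝ} (hx : x / α ∈ Icc 0 R) :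
    α * f (x / α) ≤ reducedTangent f α t u x := by
  have hle : f (x / α) ≤ f (t / α) + u * (x / α - t / α) := by
    rw [hu]
    nlinarith [hT _ ht _ hx, sq_nonneg (x / α - t / α)]
  calc α * f (x / α) ≤ α * (f (t / α) + u * (x / α - t / α)) :=
        mul_le_mul_of_nonneg_left hle hα.le
    _ = reducedTangent f α t u x := by
        unfold reducedTangent
        field_simp

theorem nonneg (hT : BelowTangentsOn (Icc 0 R) β f f') (hβ : 0 ≤ β) (hα : 0 < α)
    (hf0 : f 0 = 0) (ht : t / α ∈ Icc 0 R) (hu : u = f' (t / α)) (hu₀ : 0 ≤ u) {ρ : ℝ}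
    (hρ : 0 ≤ ρ) : 0 ≤ reducedTangent f α t u ρ := by
  have h := mul_apply_div_le hT hβ hα ht hu (x := 0)
    (by rw [zero_div]; exact left_mem_Icc.2 (ht.1.trans ht.2))
  simp only [zero_div, hf0, mul_zero, reducedTangent] at h ⊢
  nlinarith

theorem self_lt (hT : BelowTangentsOn (Icc 0 R) β f f') (hβ : 0 < β) (hf0 : f 0 = 0)
    (hα : α ∈ Ioo 0 1) (ht : t / α ∈ Icc 0 R) (ht₀ : 0 < t) : reducedTangent f α t u t < f t := by
  have h := hT.mul_apply_lt_apply_mul hβ hf0 hα ⟨div_pos ht₀ hα.1, ht.2⟩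
  rw [mul_div_cancel₀ t hα.1.ne'] at h
  simpa [reducedTangent] using h

theorem lt_of_tangent (hT : BelowTangentsOn (Icc 0 R) β f f') (hβ : 0 ≤ β) (hα : 0 < α)
    {t₂ u₂ ρ : ℝ} (ht : t / α ∈ Icc 0 R) (ht₂ : t₂ / α ∈ Icc 0 R) (hu₂ : u₂ = f' (t₂ / α))
    (h : 0 < (u - u₂) * (t - ρ)) : reducedTangent f α t u ρ < reducedTangent f α t₂ u₂ ρ := by
  have := mul_apply_div_le hT hβ hα ht₂ hu₂ ht
  unfold reducedTangent at *
  linarith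

theorem eq_zero_of_mem_contactSet (hT : BelowTangentsOn (Icc 0 R) β f f') (hβ : 0 < β)
    (hf0 : f 0 = 0) (hu : u = f' (t / α)) (ht : t = 0) {ρ : ℝ}
    (hρ : ρ ∈ contactSet f (reducedTangent f α t u) 0 R) : ρ = 0 := by
  subst ht hu
  have h := hT 0 (left_mem_Icc.2 (hρ.1.1.trans hρ.1.2)) ρ hρ.1
  simp only [contactSet, reducedTangent, zero_div, hf0, mul_zero, sub_zero, zero_add] at hρ h
  rw [hρ.2] at h
  have hρ2 : ρ ^ 2 = 0 := by nlinarith [sq_nonneg ρ]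
  exact pow_eq_zero_iff two_ne_zero |>.1 hρ2

end reducedTangent

theorem stmt_17_general
    (R β B α V : ℝ) (f f' f'' : ℝ → ℝ)
    (hR : 0 < R) (hβ : 0 < β) (hα : α ∈ Set.Ioo (0:ℝ) 1)
    (hf0 : f 0 = 0) (hfR : f R = 0)
    (hfd1 : ∀ ρ ∈ Set.Icc (0:ℝ) R, HasDerivAt f (f' ρ) ρ)
    (hfd2 : ∀ ρ ∈ Set.Icc (0:ℝ) R, HasDerivAt f' (f'' ρ) ρ)
    (hconc : ∀ ρ ∈ Set.Icc (0:ℝ) R, -B ≤ f'' ρ ∧ f'' ρ ≤ -β)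
    (rt : ℝ → ℝ)
    (hrt : ∀ u ∈ Set.Icc (0:ℝ) V, rt u ∈ Set.Icc (0:ℝ) (α * R) ∧
      HasDerivAt (fun x => α * f (x / α)) u (rt u))
    (rc rh : ℝ → ℝ)
    (hrc : ∀ u ∈ Set.Icc (0:ℝ) V, IsLeast
      {ρ : ℝ | ρ ∈ Set.Icc (0:ℝ) R ∧ f ρ = α * f (rt u / α) + u * (ρ - rt u)} (rc u))
    (hrh : ∀ u ∈ Set.Icc (0:ℝ) V, IsGreatest
      {ρ : ℝ | ρ ∈ Set.Icc (0:ℝ) R ∧ f ρ = α * f (rt u / α) + u * (ρ - rt u)} (rh u))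
    :
    ∀ um ∈ Set.Icc (0:ℝ) V, ∀ up ∈ Set.Icc (0:ℝ) V,
      up < um → rc up < rh um →
      (rc um < rc up ∧ rc up < rh um ∧ rh um < rh up) ∧
      um - up ≥ (β / 2) * (rc up - rc um) := by
  intro um hum up hup hlt hcross
  have hT : BelowTangentsOn (Icc 0 R) β f f' :=
    belowTangentsOn_of_deriv2_le (convex_Icc 0 R) hfd1 hfd2 fun ρ hρ => (hconc ρ hρ).2
  have hfc : ContinuousOn f (Icc 0 R) := fun ρ hρ => (hfd1 ρ hρ).continuousAt.continuousWithinAt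
  have hαR : Icc 0 (α * R) ⊆ Icc 0 R := Icc_subset_Icc_right (mul_le_of_le_one_left hR.le hα.2.le)
  obtain ⟨htm, hdm⟩ := hrt um hum
  obtain ⟨htp, hdp⟩ := hrt up hup
  have hsm := div_mem_Icc_of_mem_Icc_mul hα.1 htm
  have hsp := div_mem_Icc_of_mem_Icc_mul hα.1 htp
  have hum' : um = f' (rt um / α) := hdm.unique ((hfd1 _ hsm).const_mul_comp_div hα.1.ne')
  have hup' : up = f' (rt up / α) := hdp.unique ((hfd1 _ hsp).const_mul_comp_div hα.1.ne')
  have htt : rt um < rt up := by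
    by_contra! h
    linarith [hT.antitoneOn hβ.le hsp hsm (div_le_div_of_nonneg_right h hα.1.le)]
  have htm₀ : 0 < rt um := by
    refine htm.1.lt_of_ne fun h => ?_
    have := reducedTangent.eq_zero_of_mem_contactSet hT hβ hf0 hum' h.symm (hrh um hum).1
    linarith [(hrc up hup).1.1.1]
  have hcc : rc um < rc up :=
    isLeast_contactSet_lt hfc reducedTangent.continuous.continuousOn
      (by rw [hf0]; exact reducedTangent.nonneg hT hβ.le hα.1 hf0 hsm hum' hum.1 le_rfl) (hαR htm)
      (reducedTangent.self_lt hT hβ hf0 hα hsm htm₀)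
      (fun ρ hρ => reducedTangent.lt_of_tangent hT hβ.le hα.1 hsm hsp hup'
        (mul_pos (sub_pos.2 hlt) (sub_pos.2 hρ)))
      (hrc um hum) (hrc up hup).1
  have hhh : rh um < rh up :=
    lt_isGreatest_contactSet hfc reducedTangent.continuous.continuousOn
      (by rw [hfR]; exact reducedTangent.nonneg hT hβ.le hα.1 hf0 hsp hup' hup.1 hR.le) (hαR htp)
      (reducedTangent.self_lt hT hβ hf0 hα hsp (htm₀.trans htt))
      (fun ρ hρ => reducedTangent.lt_of_tangent hT hβ.le hα.1 hsp hsm hum'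
        (mul_pos_of_neg_of_neg (sub_neg.2 hlt) (sub_neg.2 hρ)))
      (hrh up hup) (hrh um hum).1
  refine ⟨⟨hcc, hcross, hhh⟩, hT.le_sub_of_interlaced hβ.le (hrc um hum).1.1 (hrc up hup).1.1
    (hrh um hum).1.1 (hrh up hup).1.1 hcc hcross hhh ?_ ?_⟩
  · rw [(hrh um hum).1.2, (hrc um hum).1.2]; ring
  · rw [(hrh up hup).1.2, (hrc up hup).1.2]; ring

theorem stmt_17
    (R β B α V : ℝ) (f v f' f'' v' : ℝ → ℝ)
    (hR : 0 < R) (hβ : 0 < β) (hB : 0 < B) (hα : α ∈ Set.Ioo (0:ℝ) 1)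
    (hf0 : f 0 = 0) (hfR : f R = 0)
    (hfv : ∀ ρ ∈ Set.Icc (0:ℝ) R, f ρ = ρ * v ρ)
    (hfd1 : ∀ ρ ∈ Set.Icc (0:ℝ) R, HasDerivAt f (f' ρ) ρ)
    (hfd2 : ∀ ρ ∈ Set.Icc (0:ℝ) R, HasDerivAt f' (f'' ρ) ρ)
    (hfc : ContinuousOn f'' (Set.Icc (0:ℝ) R))
    (hconc : ∀ ρ ∈ Set.Icc (0:ℝ) R, -B ≤ f'' ρ ∧ f'' ρ ≤ -β)
    (hvd : ∀ ρ ∈ Set.Icc (0:ℝ) R, HasDerivAt v (v' ρ) ρ)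
    (hv'neg : ∀ ρ ∈ Set.Ioo (0:ℝ) R, v' ρ < 0)
    (hvnn : ∀ ρ ∈ Set.Icc (0:ℝ) R, 0 ≤ v ρ)
    (hV : V = v 0)
    (rt : ℝ → ℝ)
    (hrt : ∀ u ∈ Set.Icc (0:ℝ) V, rt u ∈ Set.Icc (0:ℝ) (α * R) ∧
      HasDerivAt (fun x => α * f (x / α)) u (rt u))
    (rc rh : ℝ → ℝ)
    (hrc : ∀ u ∈ Set.Icc (0:ℝ) V, IsLeast
      {ρ : ℝ | ρ ∈ Set.Icc (0:ℝ) R ∧ f ρ = α * f (rt u / α) + u * (ρ - rt u)} (rc u))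
    (hrh : ∀ u ∈ Set.Icc (0:ℝ) V, IsGreatest
      {ρ : ℝ | ρ ∈ Set.Icc (0:ℝ) R ∧ f ρ = α * f (rt u / α) + u * (ρ - rt u)} (rh u))
    :
    ∀ um ∈ Set.Icc (0:ℝ) V, ∀ up ∈ Set.Icc (0:ℝ) V,
      up < um → rc up < rh um →
      (rc um < rc up ∧ rc up < rh um ∧ rh um < rh up) ∧
      um - up ≥ (β / 2) * (rc up - rc um) :=
  stmt_17_general R β B α V f f' f'' hR hβ hα hf0 hfR hfd1 hfd2 hconc rt hrt rc rh hrc hrh
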